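/- Let K(h) denote the number of Fink–Mao region words of length h. Then for every h ≥ 4, K(h) + K(h−1) = 2^(h−3). -/

import Mathlib

/-- A region of the tie diagram: left, right, or center. -/
inductive Region : Type
  | L | R | C
deriving DecidableEq

open Region

/-- A Fink–Mao region word: a list of letters from {L, R, C} with consecutive
letters distinct, first letter `L`, ending with the suffix `L,R,C` or `R,L,C`. -/
def FMWord (w : List Region) : Prop :=
  w.Chain' (· ≠ ·) ∧ w.head? = some L ∧
    ([L, R, C] <:+ w ∨ [R, L, C] <:+ w)

/-- `K h` is the number of Fink–Mao region words of length `h`. -/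
noncomputable def K (h : ℕ) : ℕ := Nat.card {w : List Region // FMWord w ∧ w.length = h}

/-! Call a word a chain if consecutive letters are distinct. The last two letters of a
Fink–Mao word are forced by the letter before them, so dropping them identifies the words of
length `n + 2` with the chains of length `n` that start at `L` and do not end in `C`; appending
`C` identifies the latter with the chains of length `n + 1` that do end in `C`. Hence
`K (n + 3) + K (n + 2)` counts all chains of length `n + 1` starting at `L`, and there are `2 ^ n`
of them because every letter has two possible successors. -/

namespace List

variable {α : Type*} (r : α → α → Prop)

def chainsFrom (a : α) (n : ℕ) : Set (List α) :=
  {w | w.IsChain r ∧ w.head? = some a ∧ w.length = n}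

def consIsChainEquiv (a : α) (n : ℕ) :
    {l : List α // (a :: l).IsChain r ∧ l.length = n + 1} ≃
      Σ b : {b // r a b}, {l : List α // (b.1 :: l).IsChain r ∧ l.length = n} where
  toFun
    | ⟨b :: l, hc, hl⟩ =>
      ⟨⟨b, (isChain_cons_cons.1 hc).1⟩, l, (isChain_cons_cons.1 hc).2, by simpa using hl⟩
  invFun | ⟨⟨b, hb⟩, l, hc, hl⟩ => ⟨b :: l, isChain_cons_cons.2 ⟨hb, hc⟩, by simp [hl]⟩
  left_inv | ⟨_ :: _, _, _⟩ => rfl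
  right_inv | ⟨⟨_, _⟩, _, _, _⟩ => rfl

variable {r}

theorem card_isChain_cons [Finite α] {d : ℕ} (hr : ∀ a, Nat.card {b // r a b} = d) (a : α)
    (n : ℕ) : Nat.card {l : List α // (a :: l).IsChain r ∧ l.length = n} = d ^ n := by
  induction n generalizing a with
  | zero =>
    rw [pow_zero, Nat.card_eq_one_iff_unique]
    exact ⟨⟨fun ⟨l, _, hl⟩ ⟨l', _, hl'⟩ => by grind⟩, ⟨⟨[], isChain_singleton a, rfl⟩⟩⟩
  | succ n ih =>
    have : Fintype {b // r a b} := Fintype.ofFinite _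
    have (b : α) : Finite {l : List α // (b :: l).IsChain r ∧ l.length = n} :=
      ((finite_length_eq α n).subset fun _ hl => hl.2).to_subtype
    rw [Nat.card_congr (consIsChainEquiv r a n), Nat.card_sigma]
    simp only [ih, Finset.sum_const, Finset.card_univ, ← Nat.card_eq_fintype_card, hr,
      smul_eq_mul, pow_succ']

theorem chainsFrom_finite [Finite α] (a : α) (n : ℕ) : (chainsFrom r a n).Finite :=
  (finite_length_eq α n).subset fun _ hw => hw.2.2

theorem chainsFrom_succ_eq_image_cons (a : α) (n : ℕ) :
    chainsFrom r a (n + 1) = (a :: ·) '' {l | (a :: l).IsChain r ∧ l.length = n} := by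
  ext w
  constructor
  · rintro ⟨hc, hh, hl⟩
    obtain ⟨l, rfl⟩ : ∃ l, w = a :: l := by
      cases w with
      | nil => simp at hh
      | cons b l => exact ⟨l, by rw [Option.some.inj hh]⟩
    exact ⟨l, ⟨hc, by simpa using hl⟩, rfl⟩
  · rintro ⟨l, ⟨hc, hl⟩, rfl⟩
    exact ⟨hc, rfl, by simp [hl]⟩

theorem ncard_chainsFrom_succ [Finite α] {d : ℕ} (hr : ∀ a, Nat.card {b // r a b} = d) (a : α)
    (n : ℕ) : (chainsFrom r a (n + 1)).ncard = d ^ n := by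
  rw [chainsFrom_succ_eq_image_cons, Set.ncard_image_of_injective _ cons_injective]
  exact card_isChain_cons hr a n

theorem chainsFrom_succ_inter_getLast {a x : α} (hax : a ≠ x) (n : ℕ) :
    chainsFrom r a (n + 1) ∩ {w | w.getLast? = some x} =
      (· ++ [x]) '' (chainsFrom r a n ∩ {v | ∀ y ∈ v.getLast?, r y x}) := by
  ext w
  constructor
  · rintro ⟨⟨hc, hh, hl⟩, hlast⟩
    obtain ⟨v, rfl⟩ := getLast?_eq_some_iff.1 hlast
    have hv : v ≠ [] := by rintro rfl; simp_all
    rw [isChain_append] at hc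
    refine ⟨v, ⟨⟨hc.1, ?_, by simpa using hl⟩, fun y hy => hc.2.2 y hy x rfl⟩, rfl⟩
    rwa [head?_append_of_ne_nil _ hv] at hh
  · rintro ⟨v, ⟨⟨hc, hh, hl⟩, hr⟩, rfl⟩
    have hv : v ≠ [] := by rintro rfl; simp_all
    refine ⟨⟨isChain_append.2 ⟨hc, isChain_singleton x, fun y hy z hz => ?_⟩, ?_, by simp [hl]⟩,
      by simp⟩
    · rw [head?_cons, Option.mem_some_iff] at hz
      exact hz ▸ hr y hy
    · rwa [head?_append_of_ne_nil _ hv]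

end List

open List

instance : Fintype Region := ⟨{L, R, C}, fun x => by cases x <;> simp⟩

theorem Region.card_subtype_ne (a : Region) : Nat.card {b // a ≠ b} = 2 := by
  rw [Nat.card_eq_fintype_card]
  cases a <;> decide

theorem ncard_chainsFrom_succ_inter_getLast_C (n : ℕ) :
    (chainsFrom (· ≠ ·) L (n + 1) ∩ {w | w.getLast? = some C}).ncard =
      (chainsFrom (· ≠ ·) L n \ {w | w.getLast? = some C}).ncard := by
  rw [chainsFrom_succ_inter_getLast (by decide), Set.ncard_image_of_injective _
    (append_left_injective [C])]
  congr 1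
  ext w
  simp only [Set.mem_inter_iff, Set.mem_sdiff, Set.mem_ofPred_eq]
  exact and_congr_right' ⟨fun h hC => h C hC rfl, fun h y hy hyC => h (hyC ▸ hy)⟩

theorem K_add_two_eq_ncard (n : ℕ) :
    K (n + 2) = (chainsFrom (· ≠ ·) L n \ {w | w.getLast? = some C}).ncard := by
  refine Set.ncard_congr (fun w _ => w.take n) ?_ ?_ ?_
  · rintro w ⟨⟨hc, hh, hsuf⟩, hl⟩
    replace hc : w.IsChain (· ≠ ·) := hc
    rcases hsuf with ⟨u, rfl⟩ | ⟨u, rfl⟩ <;>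
    · obtain rfl : n = u.length + 1 := by simp at hl; omega
      simp_all [take_length_add_append, chainsFrom]
  · rintro w w' ⟨⟨-, -, ⟨u, rfl⟩ | ⟨u, rfl⟩⟩, hl⟩ ⟨⟨-, -, ⟨u', rfl⟩ | ⟨u', rfl⟩⟩, hl'⟩ h <;>
    · obtain rfl : n = u.length + 1 := by simp at hl; omega
      have hu : u'.length = u.length := by simp at hl'; omega
      rw [take_length_add_append, ← hu, take_length_add_append] at h
      simp_all
  · rintro u ⟨⟨hc, hh, hl⟩, hlast⟩
    have hu : u ≠ [] := by rintro rfl; simp at hh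
    obtain ⟨x, hx⟩ := Option.isSome_iff_exists.1 (getLast?_isSome.2 hu)
    obtain ⟨v, rfl⟩ := getLast?_eq_some_iff.1 hx
    obtain rfl : n = v.length + 1 := by simpa using hl.symm
    cases x with
    | L =>
      refine ⟨v ++ [L, R, C], ⟨⟨(?_ : List.IsChain _ _), ?_, .inl ⟨v, rfl⟩⟩, ?_⟩, ?_⟩ <;>
        simp_all [take_length_add_append]
    | R =>
      refine ⟨v ++ [R, L, C], ⟨⟨(?_ : List.IsChain _ _), ?_, .inr ⟨v, rfl⟩⟩, ?_⟩, ?_⟩ <;>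
        simp_all [take_length_add_append]
    | C => exact absurd hx hlast

/-- For every `h ≥ 4`, `K(h) + K(h-1) = 2^(h-3)`. -/
theorem K_add_K_pred (h : ℕ) (hh : 4 ≤ h) : K h + K (h - 1) = 2 ^ (h - 3) := by
  obtain ⟨n, rfl⟩ : ∃ n, h = n + 3 := ⟨h - 3, by omega⟩
  set s := chainsFrom (· ≠ ·) L (n + 1)
  set t := {w : List Region | w.getLast? = some C}
  calc K (n + 3) + K (n + 3 - 1) = (s \ t).ncard + (s ∩ t).ncard := by
        rw [K_add_two_eq_ncard (n + 1), show n + 3 - 1 = n + 2 by omega, K_add_two_eq_ncard n,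
          ncard_chainsFrom_succ_inter_getLast_C]
    _ = s.ncard := by
        rw [add_comm, Set.ncard_inter_add_ncard_sdiff_eq_ncard s t (chainsFrom_finite _ _)]
    _ = 2 ^ (n + 3 - 3) := ncard_chainsFrom_succ Region.card_subtype_ne L n
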